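/- arXiv:2306.03394 — 2 statements merged into one kernel-verified Lean document; each statement's English description precedes it below -/
import Mathlib

section
/- Lemma (the first exit time is finite and the first exit map exists everywhere). Let A, B, C be the observer canonical realization with A Hurwitz and with positive DC gain (−C A⁻¹ B > 0). Then for every ξ ∈ ℝⁿ the set {t > 0 : C x₊(t;ξ) < 0} is nonempty, so the first exit time τ₊(ξ) is finite. Moreover, if C ξ ≥ 0 then C x₊(τ₊(ξ);ξ) = 0, i.e. the first exit map ψ₊(ξ;1) exists and lies on the switching hyperplane {x : Cx = 0}. -/
noncomputable section
open scoped Matrix ENNReal NNReal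
open Filter

/-- The observer canonical realization matrix `A` in dimension `n + 2`
(so the dimension is an arbitrary integer `≥ 2`): subdiagonal ones, last column `-a`. -/
def obsA (n : ℕ) (a : Fin (n + 2) → ℝ) : Matrix (Fin (n + 2)) (Fin (n + 2)) ℝ :=
  Matrix.of fun i j =>
    if (j : ℕ) = n + 1 then -a i else if (i : ℕ) = (j : ℕ) + 1 then 1 else 0

/-- A real square matrix is Hurwitz if all its complex eigenvalues have negative real part. -/
def IsHurwitz {m : ℕ} (A : Matrix (Fin m) (Fin m) ℝ) : Prop :=
  ∀ μ ∈ spectrum ℂ (A.map Complex.ofReal), μ.re < 0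

/-- Matrix exponential. -/
noncomputable def mexp {m : ℕ} (A : Matrix (Fin m) (Fin m) ℝ) : Matrix (Fin m) (Fin m) ℝ :=
  NormedSpace.exp A

/-- The solution `x₊(t;ξ) = e^{At}(ξ − A⁻¹B) + A⁻¹B` of `ẋ = Ax − B`, `x(0) = ξ`. -/
noncomputable def sol {m : ℕ} (A : Matrix (Fin m) (Fin m) ℝ) (B : Fin m → ℝ)
    (ξ : Fin m → ℝ) (t : ℝ) : Fin m → ℝ :=
  mexp (t • A) *ᵥ (ξ - A⁻¹ *ᵥ B) + A⁻¹ *ᵥ B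

/-- The first exit time from positive sign: `τ₊(ξ) = inf{t > 0 : C x₊(t;ξ) < 0}`,
where `C x = xₙ` is the last coordinate. -/
noncomputable def tauPlus (n : ℕ) (A : Matrix (Fin (n + 2)) (Fin (n + 2)) ℝ)
    (B ξ : Fin (n + 2) → ℝ) : ℝ :=
  sInf {t : ℝ | 0 < t ∧ sol A B ξ t (Fin.last (n + 1)) < 0}

/-- The first exit map `ψ₊(ξ;1) = x₊(τ₊(ξ);ξ)`. -/
noncomputable def psi1 (n : ℕ) (A : Matrix (Fin (n + 2)) (Fin (n + 2)) ℝ)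
    (B ξ : Fin (n + 2) → ℝ) : Fin (n + 2) → ℝ :=
  sol A B ξ (tauPlus n A B ξ)

/-- The iterated exit maps: `psiN n A B k ξ = ψ₊(ξ;k)` for `k ≥ 1`
(with the convention `psiN n A B 0 ξ = -ξ`, consistent with the
recursion `ψ₊(ξ;k) = ψ₊(−ψ₊(ξ;k−1);1)`). -/
noncomputable def psiN (n : ℕ) (A : Matrix (Fin (n + 2)) (Fin (n + 2)) ℝ)
    (B : Fin (n + 2) → ℝ) : ℕ → (Fin (n + 2) → ℝ) → (Fin (n + 2) → ℝ)
  | 0, ξ => -ξ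
  | k + 1, ξ => psi1 n A B (-(psiN n A B k ξ))

/-- View a vector of `ℝⁿ` as an element of Euclidean space (so that `‖euc v‖` is the
Euclidean 2-norm). -/
noncomputable def euc {m : ℕ} (v : Fin m → ℝ) : EuclideanSpace ℝ (Fin m) := WithLp.toLp 2 v

/-- The operator 2-norm of a matrix: the operator norm of the induced map on Euclidean space. -/
noncomputable def opn {m : ℕ} (A : Matrix (Fin m) (Fin m) ℝ) : ℝ :=
  ‖LinearMap.toContinuousLinearMap (Matrix.toEuclideanLin A)‖

/-- The set `𝒟 = {x : ‖x‖₂ ≤ R, xₙ = 0, x_{n−1} ≥ |b_{n−1}|}` on the switching hyperplane. -/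
noncomputable def ultSet (n : ℕ) (b : Fin (n + 2) → ℝ) (R : ℝ) : Set (Fin (n + 2) → ℝ) :=
  {x | ‖euc x‖ ≤ R ∧ x (Fin.last (n + 1)) = 0 ∧
    |b (Fin.last (n + 1))| ≤ x (⟨n, by omega⟩ : Fin (n + 2))}

/-- A real square matrix is Schur stable if all its complex eigenvalues have modulus `< 1`. -/
def IsSchur {m : ℕ} (P : Matrix (Fin m) (Fin m) ℝ) : Prop :=
  ∀ μ ∈ spectrum ℂ (P.map Complex.ofReal), ‖μ‖ < 1

/-!
If `A` is Hurwitz then `e^{tA} v → 0`: on a generalised eigenspace of the complexification for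
the eigenvalue `μ`, `e^{tA}` acts as `e^{tμ}` times a polynomial in `t`, and these spaces span.
Hence `C x₊(t;ξ) → C A⁻¹B < 0`, so `C x₊` is eventually negative. If `Cξ ≥ 0`, then at the
infimum `τ₊` of the negative times, `C x₊ ≤ 0` by closedness, while `C x₊(τ₊) < 0` would make
`C x₊` negative on some `(τ₊ - ε, τ₊)` with `τ₊ - ε > 0`.
-/

open NormedSpace Topology Finset
open scoped Nat

section MatrixExp

open scoped Matrix.Norms.Operator

variable {ι : Type*} [Fintype ι] [DecidableEq ι]

theorem Matrix.exp_mulVec_eq_sum_of_pow_mulVec_eq_zero {𝕂 : Type*} [RCLike 𝕂]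
    {N : Matrix ι ι 𝕂} {w : ι → 𝕂} {k : ℕ} (hw : N ^ k *ᵥ w = 0) :
    exp N *ᵥ w = ∑ j ∈ range k, (j ! : 𝕂)⁻¹ • (N ^ j *ᵥ w) := by
  have hsum := (exp_series_hasSum_exp' (𝕂 := 𝕂) N).map
    (AddMonoidHom.mk' (· *ᵥ w) fun P Q => Matrix.add_mulVec P Q w)
    (continuous_id.matrix_mulVec continuous_const)
  simp only [Function.comp_def, AddMonoidHom.mk'_apply, Matrix.smul_mulVec] at hsum
  refine hsum.unique (hasSum_sum_of_ne_finset_zero fun j hj => ?_)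
  rw [mem_range, not_lt] at hj
  rw [← Nat.sub_add_cancel hj, pow_add, ← Matrix.mulVec_mulVec, hw, Matrix.mulVec_zero, smul_zero]

theorem Matrix.exp_smul_mulVec_eq_sum_of_pow_mulVec_eq_zero {𝕂 : Type*} [RCLike 𝕂]
    {M : Matrix ι ι 𝕂} {μ : 𝕂} {w : ι → 𝕂} {k : ℕ} (hw : (M - μ • 1) ^ k *ᵥ w = 0) (z : 𝕂) :
    exp (z • M) *ᵥ w =
      ∑ j ∈ range k, (exp (z * μ) * z ^ j) • ((j ! : 𝕂)⁻¹ • ((M - μ • 1) ^ j *ᵥ w)) := by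
  set N := M - μ • 1
  have hsplit : z • M = algebraMap 𝕂 _ (z * μ) + z • N := by
    rw [Algebra.algebraMap_eq_smul_one, smul_sub, mul_smul]; abel
  have hscalar : exp (algebraMap 𝕂 (Matrix ι ι 𝕂) (z * μ)) = algebraMap 𝕂 _ (exp (z * μ)) :=
    (algebraMap_exp_comm (z * μ)).symm
  have hzN : (z • N) ^ k *ᵥ w = 0 := by rw [smul_pow, Matrix.smul_mulVec, hw, smul_zero]
  rw [hsplit, Matrix.exp_add_of_commute _ _ (Algebra.commute_algebraMap_left _ _), hscalar,
    ← Matrix.mulVec_mulVec, Matrix.exp_mulVec_eq_sum_of_pow_mulVec_eq_zero hzN,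
    Algebra.algebraMap_eq_smul_one, Matrix.smul_mulVec, Matrix.one_mulVec, smul_sum]
  refine sum_congr rfl fun j _ => ?_
  rw [smul_pow, Matrix.smul_mulVec, smul_comm _ (z ^ j), smul_smul, smul_smul]

theorem Complex.tendsto_exp_mul_mul_pow_atTop_nhds_zero {μ : ℂ} (hμ : μ.re < 0) (j : ℕ) :
    Tendsto (fun t : ℝ => Complex.exp (t * μ) * (t : ℂ) ^ j) atTop (𝓝 0) := by
  rw [tendsto_zero_iff_norm_tendsto_zero]
  refine (tendsto_rpow_mul_exp_neg_mul_atTop_nhds_zero j (-μ.re) (neg_pos.2 hμ)).congr' ?_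
  filter_upwards [eventually_ge_atTop 0] with t ht
  rw [norm_mul, Complex.norm_exp, norm_pow, Complex.norm_real, Real.norm_of_nonneg ht,
    Real.rpow_natCast, mul_comm, Complex.re_ofReal_mul, neg_neg, mul_comm t]

theorem Matrix.tendsto_exp_smul_mulVec_of_mem_maxGenEigenspace {M : Matrix ι ι ℂ} {μ : ℂ}
    (hμ : μ.re < 0) {w : ι → ℂ} (hw : w ∈ Module.End.maxGenEigenspace (Matrix.toLin' M) μ) :
    Tendsto (fun t : ℝ => exp (t • M) *ᵥ w) atTop (𝓝 0) := by
  obtain ⟨k, hk⟩ := (Module.End.mem_maxGenEigenspace _ μ w).mp hw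
  have hkw : (M - μ • 1) ^ k *ᵥ w = 0 := by
    rwa [← Matrix.toLin'_apply, Matrix.toLin'_pow, map_sub, map_smul, Matrix.toLin'_one]
  have hsum := tendsto_finsetSum (range k) fun j _ =>
    (Complex.tendsto_exp_mul_mul_pow_atTop_nhds_zero hμ j).smul_const
      ((j ! : ℂ)⁻¹ • ((M - μ • 1) ^ j *ᵥ w))
  simp only [zero_smul, sum_const_zero] at hsum
  refine hsum.congr fun t => ?_
  rw [RCLike.real_smul_eq_coe_smul (K := ℂ) t M,
    Matrix.exp_smul_mulVec_eq_sum_of_pow_mulVec_eq_zero hkw, Complex.exp_eq_exp_ℂ,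
    RCLike.ofReal_eq_complex_ofReal]

def Matrix.expDecaySubmodule (M : Matrix ι ι ℂ) : Submodule ℂ (ι → ℂ) where
  carrier := {w | Tendsto (fun t : ℝ => exp (t • M) *ᵥ w) atTop (𝓝 0)}
  add_mem' hv hw := by simpa [Matrix.mulVec_add] using hv.add hw
  zero_mem' := by simp
  smul_mem' c _ hw := by simpa [Matrix.mulVec_smul] using hw.const_smul c

theorem Matrix.tendsto_exp_smul_mulVec_atTop_nhds_zero {M : Matrix ι ι ℂ}
    (hM : ∀ μ ∈ spectrum ℂ M, μ.re < 0) (w : ι → ℂ) :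
    Tendsto (fun t : ℝ => exp (t • M) *ᵥ w) atTop (𝓝 0) := by
  suffices ⊤ ≤ M.expDecaySubmodule from this Submodule.mem_top
  rw [← Module.End.iSup_maxGenEigenspace_eq_top]
  refine iSup_le fun μ => ?_
  rcases eq_or_ne (Module.End.maxGenEigenspace (Matrix.toLin' M) μ) ⊥ with hbot | hne
  · exact hbot ▸ bot_le
  · have hμ : μ ∈ spectrum ℂ M := Matrix.spectrum_toLin' M ▸
      (Module.End.HasUnifEigenvalue.lt (k := ⊤) zero_lt_one hne).mem_spectrum
    exact fun w hw => Matrix.tendsto_exp_smul_mulVec_of_mem_maxGenEigenspace (hM μ hμ) hw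

theorem Matrix.map_ofReal_exp (A : Matrix ι ι ℝ) :
    (exp A).map Complex.ofReal = exp (A.map Complex.ofReal) :=
  map_exp Complex.ofRealHom.mapMatrix (continuous_id.matrix_map Complex.continuous_ofReal) A

end MatrixExp

section Flow

variable {m : ℕ}

theorem IsHurwitz.tendsto_mexp_smul_mulVec {A : Matrix (Fin m) (Fin m) ℝ} (hA : IsHurwitz A)
    (v : Fin m → ℝ) : Tendsto (fun t : ℝ => mexp (t • A) *ᵥ v) atTop (𝓝 0) := by
  have hC := Matrix.tendsto_exp_smul_mulVec_atTop_nhds_zero hA (Complex.ofReal ∘ v)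
  rw [tendsto_pi_nhds] at hC ⊢
  intro i
  have hre := (Complex.continuous_re.tendsto 0).comp (hC i)
  rw [Complex.zero_re] at hre
  rw [Pi.zero_apply]
  refine hre.congr fun t => ?_
  rw [Function.comp_apply, ← Matrix.map_smul _ t fun x => by simp [Complex.real_smul],
    ← Matrix.map_ofReal_exp]
  exact congrArg Complex.re (RingHom.map_mulVec Complex.ofRealHom _ v i).symm

theorem sol_zero (A : Matrix (Fin m) (Fin m) ℝ) (B ξ : Fin m → ℝ) : sol A B ξ 0 = ξ := by
  simp [sol, mexp]

theorem continuous_sol (A : Matrix (Fin m) (Fin m) ℝ) (B ξ : Fin m → ℝ) :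
    Continuous (sol A B ξ) := by
  open scoped Matrix.Norms.Operator in
  have hexp : Continuous fun t : ℝ => exp (t • A) :=
    exp_continuous.comp (continuous_id.smul continuous_const)
  exact (hexp.matrix_mulVec continuous_const).add continuous_const

theorem IsHurwitz.tendsto_sol {A : Matrix (Fin m) (Fin m) ℝ} (hA : IsHurwitz A)
    (B ξ : Fin m → ℝ) : Tendsto (sol A B ξ) atTop (𝓝 (A⁻¹ *ᵥ B)) := by
  have h := (hA.tendsto_mexp_smul_mulVec (ξ - A⁻¹ *ᵥ B)).add_const (A⁻¹ *ᵥ B)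
  rwa [zero_add] at h

end Flow

theorem Continuous.apply_sInf_setOf_lt_zero_eq_zero {F : ℝ → ℝ} (hF : Continuous F)
    (h0 : 0 ≤ F 0) (hS : {t | 0 < t ∧ F t < 0}.Nonempty) :
    F (sInf {t | 0 < t ∧ F t < 0}) = 0 := by
  set S := {t | 0 < t ∧ F t < 0}
  have hbdd : BddBelow S := ⟨0, fun t ht => ht.1.le⟩
  refine le_antisymm (closure_minimal (fun t ht => ht.2.le) (isClosed_le hF continuous_const)
    (csInf_mem_closure hS hbdd)) (not_lt.1 fun hneg => ?_)
  have hpos : 0 < sInf S := (le_csInf hS fun t ht => ht.1.le).lt_of_ne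
    fun h => hneg.not_ge (by rwa [← h])
  obtain ⟨t, htneg, htmem⟩ := ((hF.continuousAt.eventually_lt continuousAt_const hneg).filter_mono
    nhdsWithin_le_nhds |>.and (Ioo_mem_nhdsLT hpos)).exists
  exact htmem.2.not_ge (csInf_le hbdd ⟨htmem.1, htneg⟩)

/-- the first exit time is finite and the first exit map exists
everywhere. If `A` is Hurwitz and the DC gain `−C A⁻¹ B` is positive, then for every
`ξ` the set `{t > 0 : C x₊(t;ξ) < 0}` is nonempty (so `τ₊(ξ)` is finite); moreover if
`Cξ ≥ 0` then `C x₊(τ₊(ξ);ξ) = 0`, i.e. `ψ₊(ξ;1)` lies on the switching hyperplane. -/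
theorem first_exit_time_finite_and_exit_map_exists
    (n : ℕ) (a b : Fin (n + 2) → ℝ)
    (hA : IsHurwitz (obsA n a))
    (hdc : 0 < -(((obsA n a)⁻¹ *ᵥ b) (Fin.last (n + 1))))
    (ξ : Fin (n + 2) → ℝ) :
    {t : ℝ | 0 < t ∧ sol (obsA n a) b ξ t (Fin.last (n + 1)) < 0}.Nonempty ∧
    (0 ≤ ξ (Fin.last (n + 1)) →
      sol (obsA n a) b ξ (tauPlus n (obsA n a) b ξ) (Fin.last (n + 1)) = 0) := by
  have hlim := (continuous_apply (Fin.last (n + 1))).tendsto _ |>.comp (hA.tendsto_sol b ξ)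
  have hne : {t : ℝ | 0 < t ∧ sol (obsA n a) b ξ t (Fin.last (n + 1)) < 0}.Nonempty :=
    ((eventually_gt_atTop 0).and (hlim.eventually_lt_const (neg_pos.1 hdc))).exists
  refine ⟨hne, fun hξ => ?_⟩
  exact ((continuous_apply _).comp (continuous_sol _ b ξ)).apply_sInf_setOf_lt_zero_eq_zero
    (by rwa [Function.comp_apply, sol_zero]) hne
end
end

section
/- Lemma (minimum inter-switch duration). Let A, B, C be the observer canonical realization with A Hurwitz, and assume b_{n−1} ≠ 0. Let M ≥ 1 and σ > 0 satisfy ‖e^{At}‖₂ ≤ M e^{−σt} for all t ≥ 0, and set M̂ = M(2M+1)‖B‖₂/σ. Let x(·) be a trajectory of the form x(t) = e^{At}x₀ + ∫₀ᵗ e^{A(t−s)} B u(s) ds with u measurable and |u| ≤ 1, and suppose 0 ≤ t₁ < t₂ are such that ‖x(t)‖₂ ≤ M̂ for all t ∈ [t₁, t₂], and the two endpoints lie on the switching hyperplane on opposite sides of the evanescent strip: xₙ(t₁) = xₙ(t₂) = 0 with x_{n−1}(t₁) ≥ |b_{n−1}| and x_{n−1}(t₂) ≤ −|b_{n−1}|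 (or with these two sign conditions exchanged). Then t₂ − t₁ ≥ 2|b_{n−1}| / (‖A‖₂ M̂ + ‖B‖₂). -/
noncomputable section
open scoped Matrix ENNReal NNReal
open Filter

/-
The argument is a Lipschitz estimate. Restarting the variation-of-constants formula at time `p`
gives, for `h = q - p`,
`x q - x p = (e^{hA} - 1) x p + ∫_p^q u(s) e^{(q-s)A} b ds`, whose Euclidean norm is at most
`e^{h‖A‖} (‖A‖ M̂ + ‖b‖) h` while the trajectory stays in the ball of radius `M̂`. Summing over a
uniform mesh of `[t₁, t₂]` and letting the mesh go to zero removes the factor `e^{h‖A‖}`, so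
`‖x t₂ - x t₁‖ ≤ (‖A‖ M̂ + ‖b‖)(t₂ - t₁)`. The coordinate `x_{n-1}` moves by at least
`2 |b_{n-1}|` between the two endpoints, which bounds `t₂ - t₁` from below.
-/

open NormedSpace MeasureTheory Topology

theorem NormedSpace.norm_exp_sub_one_le {𝔸 : Type*} [NormedRing 𝔸] [NormedAlgebra ℝ 𝔸]
    [CompleteSpace 𝔸] (x : 𝔸) : ‖exp x - 1‖ ≤ Real.exp ‖x‖ - 1 := by
  have hx := (hasSum_nat_add_iff' 1).mpr (exp_series_hasSum_exp' (𝕂 := ℝ) x)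
  have hr := (hasSum_nat_add_iff' 1).mpr (exp_series_hasSum_exp' (𝕂 := ℝ) ‖x‖)
  simp only [Finset.sum_range_one, pow_zero, Nat.factorial_zero, Nat.cast_one, inv_one,
    one_smul] at hx hr
  rw [Real.exp_eq_exp_ℝ, ← hx.tsum_eq]
  refine tsum_of_norm_bounded hr fun k => ?_
  rw [norm_smul, Real.norm_of_nonneg (by positivity), smul_eq_mul]
  exact mul_le_mul_of_nonneg_left (norm_pow_le' x k.succ_pos) (by positivity)

theorem Real.exp_sub_one_le_mul_exp (y : ℝ) : Real.exp y - 1 ≤ y * Real.exp y := by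
  have h := mul_le_mul_of_nonneg_right (Real.add_one_le_exp (-y)) (Real.exp_pos y).le
  rw [← Real.exp_add, neg_add_cancel, Real.exp_zero] at h
  linarith

theorem norm_sub_le_mul_of_norm_sub_le_exp_mul {E : Type*} [SeminormedAddCommGroup E]
    {f : ℝ → E} {a b c L : ℝ} (hab : a ≤ b)
    (hf : ∀ p q, a ≤ p → p ≤ q → q ≤ b → ‖f q - f p‖ ≤ Real.exp ((q - p) * c) * L * (q - p)) :
    ‖f b - f a‖ ≤ L * (b - a) := by
  have hmesh (N : ℕ) : ‖f b - f a‖ ≤ Real.exp ((b - a) / (N + 1) * c) * L * (b - a) := by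
    set h := (b - a) / (N + 1)
    have hh : 0 ≤ h := div_nonneg (sub_nonneg.2 hab) (by positivity)
    have hNh : (N + 1 : ℝ) * h = b - a := mul_div_cancel₀ _ (by positivity)
    set s : ℕ → ℝ := fun k => a + k * h
    have hs (k : ℕ) (hk : k ≤ N + 1) : a ≤ s k ∧ s k ≤ b := by
      have hk' : (k : ℝ) ≤ N + 1 := by exact_mod_cast hk
      constructor <;> nlinarith
    have hs₀ : s 0 = a := by simp [s]
    have hs_last : s (N + 1) = b := by simp only [s]; push_cast; rw [hNh]; ring
    calc ‖f b - f a‖ = dist (f (s 0)) (f (s (N + 1))) := by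
          rw [hs₀, hs_last, dist_comm, dist_eq_norm]
      _ ≤ ∑ k ∈ Finset.range (N + 1), dist (f (s k)) (f (s (k + 1))) :=
          dist_le_range_sum_dist (f ∘ s) (N + 1)
      _ ≤ ∑ k ∈ Finset.range (N + 1), Real.exp (h * c) * L * h := by
          refine Finset.sum_le_sum fun k hk => ?_
          have hk := Finset.mem_range.1 hk
          have hstep : s (k + 1) - s k = h := by simp only [s]; push_cast; ring
          rw [dist_comm, dist_eq_norm, ← hstep]
          exact hf _ _ (hs k hk.le).1 (by linarith) (hs (k + 1) hk).2
      _ = Real.exp (h * c) * L * (b - a) := by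
          rw [Finset.sum_const, Finset.card_range, nsmul_eq_mul, ← hNh]; push_cast; ring
  have hmesh_to_zero : Tendsto (fun N : ℕ => (b - a) / (N + 1)) atTop (𝓝 0) := by
    refine ((tendsto_const_div_atTop_nhds_zero_nat (b - a)).comp (tendsto_add_atTop_nat 1)).congr
      fun N => ?_
    simp
  refine ge_of_tendsto' (x := atTop) ?_ hmesh
  have hexp := (Real.continuous_exp.tendsto 0).comp (zero_mul c ▸ hmesh_to_zero.mul_const c)
  simpa using (hexp.mul_const L).mul_const (b - a)

-- With the L2 operator norm on matrices, `‖P‖` is definitionally `opn P`, and `mexp` is the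
-- exponential of this Banach algebra.
open scoped Matrix.Norms.L2Operator

variable {m : ℕ}

namespace Matrix

theorem norm_euc_mulVec_le (P : Matrix (Fin m) (Fin m) ℝ) (v : Fin m → ℝ) :
    ‖euc (P *ᵥ v)‖ ≤ ‖P‖ * ‖euc v‖ :=
  l2_opNorm_mulVec P (euc v)

theorem norm_euc_exp_smul_mulVec_sub_le (A : Matrix (Fin m) (Fin m) ℝ) (v : Fin m → ℝ) {r : ℝ}
    (hr : 0 ≤ r) : ‖euc (exp (r • A) *ᵥ v - v)‖ ≤ (Real.exp (r * ‖A‖) - 1) * ‖euc v‖ := by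
  have hrA : ‖r • A‖ ≤ r * ‖A‖ := (norm_smul_le r A).trans_eq (by rw [Real.norm_of_nonneg hr])
  calc ‖euc (exp (r • A) *ᵥ v - v)‖ = ‖euc ((exp (r • A) - 1) *ᵥ v)‖ := by
        rw [sub_mulVec, one_mulVec]
    _ ≤ ‖exp (r • A) - 1‖ * ‖euc v‖ := norm_euc_mulVec_le _ _
    _ ≤ (Real.exp (r * ‖A‖) - 1) * ‖euc v‖ := by
        gcongr
        exact (norm_exp_sub_one_le _).trans (by gcongr)

theorem norm_euc_exp_smul_mulVec_le (A : Matrix (Fin m) (Fin m) ℝ) (v : Fin m → ℝ) {r : ℝ}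
    (hr : 0 ≤ r) : ‖euc (exp (r • A) *ᵥ v)‖ ≤ Real.exp (r * ‖A‖) * ‖euc v‖ := by
  calc ‖euc (exp (r • A) *ᵥ v)‖ ≤ ‖euc v‖ + ‖euc (exp (r • A) *ᵥ v - v)‖ :=
        norm_le_insert' _ _
    _ ≤ ‖euc v‖ + (Real.exp (r * ‖A‖) - 1) * ‖euc v‖ := by
        gcongr; exact norm_euc_exp_smul_mulVec_sub_le A v hr
    _ = Real.exp (r * ‖A‖) * ‖euc v‖ := by ring

theorem continuous_exp_smul_mulVec (A : Matrix (Fin m) (Fin m) ℝ) (v : Fin m → ℝ) :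
    Continuous fun r : ℝ => exp (r • A) *ᵥ v :=
  (continuous_iff_continuousAt.2 fun r => (hasDerivAt_exp_smul_const (𝕂 := ℝ) A r).continuousAt
    ).matrix_mulVec continuous_const

end Matrix

theorem euc_intervalIntegral {p q : ℝ} (f : ℝ → Fin m → ℝ)
    (hf : IntervalIntegrable f volume p q) :
    euc (∫ s in p..q, f s) = ∫ s in p..q, euc (f s) :=
  ((EuclideanSpace.equiv (Fin m) ℝ).symm.toContinuousLinearMap.intervalIntegral_comp_comm hf).symm

theorem intervalIntegrable_of_abs_le_one {u : ℝ → ℝ} (hu : Measurable u)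
    (hu1 : ∀ s : ℝ, 0 ≤ s → |u s| ≤ 1) {p q : ℝ} (hp : 0 ≤ p) (hq : 0 ≤ q) :
    IntervalIntegrable u volume p q := by
  refine (intervalIntegrable_const (c := (1 : ℝ))).mono_fun' hu.aestronglyMeasurable ?_
  refine (ae_restrict_iff' measurableSet_uIoc).2 (ae_of_all _ fun s hs => ?_)
  exact hu1 s ((le_min hp hq).trans hs.1.le)

theorem intervalIntegrable_smul_exp_mulVec (A : Matrix (Fin m) (Fin m) ℝ) (b : Fin m → ℝ)
    {u : ℝ → ℝ} {p q : ℝ} (hu : IntervalIntegrable u volume p q) (c : ℝ) :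
    IntervalIntegrable (fun s => u s • (exp ((c - s) • A) *ᵥ b)) volume p q :=
  hu.smul_continuousOn <|
    ((Matrix.continuous_exp_smul_mulVec A b).comp (continuous_const.sub continuous_id)).continuousOn

-- The variation-of-constants formula for `ẋ = A x + u b`, `x 0 = x₀`, on `t ≥ 0`.
def IsMildSolution (A : Matrix (Fin m) (Fin m) ℝ) (b : Fin m → ℝ) (u : ℝ → ℝ)
    (x₀ : Fin m → ℝ) (x : ℝ → Fin m → ℝ) : Prop :=
  ∀ t : ℝ, 0 ≤ t → x t = exp (t • A) *ᵥ x₀ + ∫ s in (0:ℝ)..t, u s • (exp ((t - s) • A) *ᵥ b)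

namespace IsMildSolution

variable {A : Matrix (Fin m) (Fin m) ℝ} {b : Fin m → ℝ} {u : ℝ → ℝ} {x₀ : Fin m → ℝ}
  {x : ℝ → Fin m → ℝ}

theorem eq_restart (hx : IsMildSolution A b u x₀ x) (hu : Measurable u)
    (hu1 : ∀ s : ℝ, 0 ≤ s → |u s| ≤ 1) {p q : ℝ} (hp : 0 ≤ p) (hpq : p ≤ q) :
    x q = exp ((q - p) • A) *ᵥ x p + ∫ s in p..q, u s • (exp ((q - s) • A) *ᵥ b) := by
  have hq : 0 ≤ q := hp.trans hpq
  have hsemigroup (s : ℝ) : exp ((q - p) • A) * exp ((p - s) • A) = exp ((q - s) • A) := by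
    rw [← Matrix.exp_add_of_commute _ _ ((Commute.refl A).smul_left _ |>.smul_right _),
      ← add_smul, sub_add_sub_cancel]
  have hint {r r' : ℝ} (hr : 0 ≤ r) (hr' : 0 ≤ r') (c : ℝ) :=
    intervalIntegrable_smul_exp_mulVec A b (intervalIntegrable_of_abs_le_one hu hu1 hr hr') c
  set P := exp ((q - p) • A)
  have hpush : P *ᵥ ∫ s in (0:ℝ)..p, u s • (exp ((p - s) • A) *ᵥ b) =
      ∫ s in (0:ℝ)..p, u s • (exp ((q - s) • A) *ᵥ b) := by
    have h := (Matrix.mulVecLin P).toContinuousLinearMap.intervalIntegral_comp_comm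
      (hint le_rfl hp p)
    simp only [LinearMap.coe_toContinuousLinearMap', Matrix.mulVecLin_apply, Matrix.mulVec_smul,
      Matrix.mulVec_mulVec, hsemigroup] at h
    exact h.symm
  have hP : P * exp (p • A) = exp (q • A) := by simpa using hsemigroup 0
  rw [hx q hq, hx p hp, Matrix.mulVec_add, Matrix.mulVec_mulVec, hpush, hP, add_assoc,
    intervalIntegral.integral_add_adjacent_intervals (hint le_rfl hp q) (hint hp hq q)]

theorem norm_euc_sub_le (hx : IsMildSolution A b u x₀ x) (hu : Measurable u)
    (hu1 : ∀ s : ℝ, 0 ≤ s → |u s| ≤ 1) {p q : ℝ} (hp : 0 ≤ p) (hpq : p ≤ q) :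
    ‖euc (x q - x p)‖ ≤
      Real.exp ((q - p) * ‖A‖) * (‖A‖ * ‖euc (x p)‖ + ‖euc b‖) * (q - p) := by
  have hqp : 0 ≤ q - p := sub_nonneg.2 hpq
  have hfree : ‖euc (exp ((q - p) • A) *ᵥ x p - x p)‖ ≤
      (q - p) * ‖A‖ * Real.exp ((q - p) * ‖A‖) * ‖euc (x p)‖ :=
    (Matrix.norm_euc_exp_smul_mulVec_sub_le A (x p) hqp).trans <| by
      gcongr; exact Real.exp_sub_one_le_mul_exp _
  have hforced : ‖euc (∫ s in p..q, u s • (exp ((q - s) • A) *ᵥ b))‖ ≤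
      Real.exp ((q - p) * ‖A‖) * ‖euc b‖ * (q - p) := by
    rw [euc_intervalIntegral _ (intervalIntegrable_smul_exp_mulVec A b
      (intervalIntegrable_of_abs_le_one hu hu1 hp (hp.trans hpq)) q)]
    refine (intervalIntegral.norm_integral_le_of_norm_le_const fun s hs => ?_).trans_eq
      (by rw [abs_of_nonneg hqp])
    rw [Set.uIoc_of_le hpq] at hs
    have hus : |u s| ≤ 1 := hu1 s (hp.trans hs.1.le)
    calc ‖euc (u s • (exp ((q - s) • A) *ᵥ b))‖ = |u s| * ‖euc (exp ((q - s) • A) *ᵥ b)‖ :=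
          by rw [euc, WithLp.toLp_smul, norm_smul, Real.norm_eq_abs]; rfl
      _ ≤ 1 * (Real.exp ((q - s) * ‖A‖) * ‖euc b‖) := by
          gcongr; exact Matrix.norm_euc_exp_smul_mulVec_le A b (by linarith [hs.2])
      _ ≤ Real.exp ((q - p) * ‖A‖) * ‖euc b‖ := by
          rw [one_mul]; gcongr; linarith [hs.1]
  have hsplit : euc (x q - x p) = euc (exp ((q - p) • A) *ᵥ x p - x p) +
      euc (∫ s in p..q, u s • (exp ((q - s) • A) *ᵥ b)) := by
    rw [← WithLp.toLp_add, hx.eq_restart hu hu1 hp hpq, add_sub_right_comm]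
    rfl
  calc ‖euc (x q - x p)‖ ≤ _ := hsplit ▸ norm_add_le _ _
    _ ≤ _ := add_le_add hfree hforced
    _ = _ := by ring

theorem norm_euc_sub_le_of_forall_norm_le (hx : IsMildSolution A b u x₀ x) (hu : Measurable u)
    (hu1 : ∀ s : ℝ, 0 ≤ s → |u s| ≤ 1) {t₁ t₂ R : ℝ} (ht₁ : 0 ≤ t₁) (h12 : t₁ ≤ t₂)
    (hR : ∀ t ∈ Set.Icc t₁ t₂, ‖euc (x t)‖ ≤ R) :
    ‖euc (x t₂ - x t₁)‖ ≤ (‖A‖ * R + ‖euc b‖) * (t₂ - t₁) := by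
  refine norm_sub_le_mul_of_norm_sub_le_exp_mul (f := fun t => euc (x t)) (c := ‖A‖) h12
    fun p q hp hpq hq => ?_
  refine (hx.norm_euc_sub_le hu hu1 (ht₁.trans hp) hpq).trans ?_
  gcongr
  exact hR p ⟨hp, hpq.trans hq⟩

end IsMildSolution

/-- minimum inter-switch duration.
For the observer canonical realization with `A` Hurwitz and `b_{n−1} ≠ 0`, with
`M̂ = M(2M+1)‖B‖₂/σ`, any trajectory segment that stays in the ball of radius `M̂` and
whose endpoints lie on the switching hyperplane on opposite sides of the evanescent
strip takes at least `2|b_{n−1}| / (‖A‖₂ M̂ + ‖B‖₂)` units of time. -/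
theorem minimum_inter_switch_duration
    (n : ℕ) (a b : Fin (n + 2) → ℝ)
    (M σ : ℝ)
    (u : ℝ → ℝ) (hu : Measurable u) (hu1 : ∀ t : ℝ, 0 ≤ t → |u t| ≤ 1)
    (x₀ : Fin (n + 2) → ℝ) (x : ℝ → Fin (n + 2) → ℝ)
    (hx : ∀ t : ℝ, 0 ≤ t →
      x t = mexp (t • obsA n a) *ᵥ x₀ +
        ∫ s in (0:ℝ)..t, u s • (mexp ((t - s) • obsA n a) *ᵥ b))
    (t₁ t₂ : ℝ) (ht₁ : 0 ≤ t₁) (h12 : t₁ < t₂)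
    (hball : ∀ t ∈ Set.Icc t₁ t₂, ‖euc (x t)‖ ≤ M * (2 * M + 1) * ‖euc b‖ / σ)
    (hsides :
      (|b (Fin.last (n + 1))| ≤ x t₁ (⟨n, by omega⟩ : Fin (n + 2)) ∧
        x t₂ (⟨n, by omega⟩ : Fin (n + 2)) ≤ -|b (Fin.last (n + 1))|) ∨
      (|b (Fin.last (n + 1))| ≤ x t₂ (⟨n, by omega⟩ : Fin (n + 2)) ∧
        x t₁ (⟨n, by omega⟩ : Fin (n + 2)) ≤ -|b (Fin.last (n + 1))|)) :
    2 * |b (Fin.last (n + 1))| /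
        (opn (obsA n a) * (M * (2 * M + 1) * ‖euc b‖ / σ) + ‖euc b‖) ≤ t₂ - t₁ := by
  set i : Fin (n + 2) := ⟨n, by omega⟩
  have hR : 0 ≤ M * (2 * M + 1) * ‖euc b‖ / σ :=
    (norm_nonneg _).trans (hball t₁ ⟨le_rfl, h12.le⟩)
  have hgap : 2 * |b (Fin.last (n + 1))| ≤ |(x t₂ - x t₁) i| := by
    rw [Pi.sub_apply]
    rcases hsides with ⟨h₁, h₂⟩ | ⟨h₁, h₂⟩
    · exact le_abs.2 (Or.inr (by linarith))
    · exact le_abs.2 (Or.inl (by linarith))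
  have hcoord : |(x t₂ - x t₁) i| ≤ ‖euc (x t₂ - x t₁)‖ := PiLp.norm_apply_le (euc _) i
  have hlip := IsMildSolution.norm_euc_sub_le_of_forall_norm_le hx hu hu1 ht₁ h12.le hball
  refine div_le_of_le_mul₀ (add_nonneg (mul_nonneg (norm_nonneg _) hR) (norm_nonneg _))
    (sub_nonneg.2 h12.le) ((hgap.trans (hcoord.trans hlip)).trans_eq (mul_comm _ _))
end
end
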